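/- arXiv:2403.06896 — 3 statements merged into one kernel-verified Lean document; each statement's English description precedes it below -/
import Mathlib

section
/- Let ψ_A, ψ_B ∈ ℂ² be unit vectors and let {α_{1,0}, α_{1,1}}, {α_{2,0}, α_{2,1}}, {β_{1,0}, β_{1,1}}, {β_{2,0}, β_{2,1}} be orthonormal bases of ℂ². Then the Born-rule empirical model of the product state ψ_A ⊗ ψ_B in the two-party Bell scenario, e_{{a_i, b_j}}(s,t) = |⟨α_{i,s} ⊗ β_{j,t}, ψ_A ⊗ ψ_B⟩|², is noncontextual: there exists a probability distribution d on functions g : {a₁,a₂,b₁,b₂} → {0,1} such that for every i, j ∈ {1,2} and every (s,t) ∈ {0,1}², Σ_{g : g(a_i) = s and g(b_j) = t} d(g) = e_{{a_i,b_j}}(s,t). -/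
/-!
For a product state the Born probabilities factor,
`|⟨α_{i,s} ⊗ β_{j,t}, ψ_A ⊗ ψ_B⟩|² = |⟨α_{i,s}, ψ_A⟩|² · |⟨β_{j,t}, ψ_B⟩|²`, and by Parseval each
factor is a probability distribution on the outcomes of one measurement. The product of these four
distributions, i.e. the four measurements answered independently, is then a global distribution
whose marginal on `{a_i, b_j}` is the Born one.
-/

open scoped ComplexConjugate

/-- Standard Hermitian inner product on `ℂ²` (conjugate-linear in the first slot). -/
noncomputable def ip2 (u v : Fin 2 → ℂ) : ℂ := ∑ i, conj (u i) * v i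

/-- Tensor product `u ⊗ v ∈ ℂ² ⊗ ℂ²`, as a function on `Fin 2 × Fin 2`. -/
noncomputable def tens (u v : Fin 2 → ℂ) : Fin 2 × Fin 2 → ℂ := fun p => u p.1 * v p.2

/-- Standard Hermitian inner product on `ℂ² ⊗ ℂ²` (conjugate-linear in the
first slot). -/
noncomputable def ip4 (u v : Fin 2 × Fin 2 → ℂ) : ℂ := ∑ p, conj (u p) * v p

open Finset

section ProductDistribution

variable {X O : Type*} [Fintype X] [DecidableEq X] [Fintype O]

theorem sum_prod_apply_eq_one (p : X → O → ℝ) (hp : ∀ x, ∑ o, p x o = 1) :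
    ∑ g : X → O, ∏ x, p x (g x) = 1 := by
  rw [← Fintype.prod_sum, Fintype.prod_eq_one _ hp]

variable [DecidableEq O]

theorem sum_filter_forall_mem_prod_apply (p : X → O → ℝ) (T : X → Finset O) :
    ∑ g ∈ univ.filter (fun g : X → O => ∀ x, g x ∈ T x), ∏ x, p x (g x) =
      ∏ x, ∑ o ∈ T x, p x o := by
  rw [prod_univ_sum]
  congr 1
  ext g
  simp [Fintype.mem_piFinset]

theorem sum_filter_prod_apply_eq_mul (p : X → O → ℝ) (hp : ∀ x, ∑ o, p x o = 1)
    {x y : X} (hxy : x ≠ y) (s t : O) :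
    ∑ g ∈ univ.filter (fun g : X → O => g x = s ∧ g y = t), ∏ z, p z (g z) = p x s * p y t := by
  let T : X → Finset O := fun z => if z = x then {s} else if z = y then {t} else univ
  have hT : ∀ g : X → O, (g x = s ∧ g y = t) ↔ ∀ z, g z ∈ T z := by
    refine fun g => ⟨?_, fun h => by simpa [T, hxy.symm] using And.intro (h x) (h y)⟩
    rintro ⟨rfl, rfl⟩ z
    by_cases hx : z = x
    · simp [T, hx]
    · by_cases hy : z = y <;> simp [T, hx, hy, hxy.symm]
  simp_rw [hT]
  rw [sum_filter_forall_mem_prod_apply, ← mul_prod_erase _ _ (mem_univ x),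
    ← mul_prod_erase _ _ (mem_erase.2 ⟨hxy.symm, mem_univ y⟩), prod_eq_one]
  · simp [T, hxy.symm]
  · intro z hz
    obtain ⟨hzy, hzx⟩ : z ≠ y ∧ z ≠ x := by simpa using hz
    simp [T, hzx, hzy, hp]

end ProductDistribution

theorem ip4_tens (a b c d : Fin 2 → ℂ) : ip4 (tens a b) (tens c d) = ip2 a c * ip2 b d := by
  simp only [ip4, ip2, tens, Fintype.sum_prod_type, sum_mul_sum, map_mul]
  exact sum_congr rfl fun i _ => sum_congr rfl fun j _ => by ring

theorem ip2_eq_inner (u v : Fin 2 → ℂ) :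
    ip2 u v = inner ℂ (WithLp.toLp 2 u) (WithLp.toLp 2 v) := by
  simp [ip2, EuclideanSpace.inner_toLp_toLp, dotProduct, mul_comm]

theorem sum_norm_ip2_sq_of_orthonormal {v : Fin 2 → Fin 2 → ℂ}
    (hv : ∀ s t, ip2 (v s) (v t) = if s = t then 1 else 0) (ψ : Fin 2 → ℂ) :
    ∑ s, ‖ip2 (v s) ψ‖ ^ 2 = ∑ i, ‖ψ i‖ ^ 2 := by
  have hon : Orthonormal ℂ fun s => WithLp.toLp 2 (v s) := by
    simpa [orthonormal_iff_ite, ← ip2_eq_inner] using hv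
  have hspan := hon.linearIndependent.span_eq_top_of_card_eq_finrank (by simp)
  have := (OrthonormalBasis.mk hon hspan.ge).sum_sq_norm_inner_right (WithLp.toLp 2 ψ)
  simpa [ip2_eq_inner, EuclideanSpace.norm_sq_eq] using this

theorem product_state_bell_model_noncontextual
    (ψA ψB : Fin 2 → ℂ)
    (hψA : ∑ i, ‖ψA i‖ ^ 2 = 1) (hψB : ∑ i, ‖ψB i‖ ^ 2 = 1)
    (α β : Fin 2 → Fin 2 → Fin 2 → ℂ)
    (hα : ∀ i s t, ip2 (α i s) (α i t) = if s = t then 1 else 0)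
    (hβ : ∀ j s t, ip2 (β j s) (β j t) = if s = t then 1 else 0) :
    ∃ d : (Fin 2 ⊕ Fin 2 → Fin 2) → ℝ,
      (∀ g, 0 ≤ d g) ∧ (∑ g, d g) = 1 ∧
      ∀ i j s t : Fin 2,
        (∑ g ∈ Finset.univ.filter
            (fun g : Fin 2 ⊕ Fin 2 → Fin 2 => g (.inl i) = s ∧ g (.inr j) = t), d g)
          = ‖ip4 (tens (α i s) (β j t)) (tens ψA ψB)‖ ^ 2 := by
  let p : Fin 2 ⊕ Fin 2 → Fin 2 → ℝ :=
    Sum.elim (fun i s => ‖ip2 (α i s) ψA‖ ^ 2) (fun j t => ‖ip2 (β j t) ψB‖ ^ 2)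
  have hp : ∀ x, ∑ o, p x o = 1
    | .inl i => (sum_norm_ip2_sq_of_orthonormal (hα i) ψA).trans hψA
    | .inr j => (sum_norm_ip2_sq_of_orthonormal (hβ j) ψB).trans hψB
  refine ⟨fun g => ∏ x, p x (g x),
    fun g => prod_nonneg fun x _ => by cases x <;> exact sq_nonneg _,
    sum_prod_apply_eq_one p hp, fun i j s t => ?_⟩
  rw [sum_filter_prod_apply_eq_mul p hp Sum.inl_ne_inr, ip4_tens, norm_mul, mul_pow]
  rfl
end

section
/- For θ ∈ [0,π], let e_θ denote the Born-rule empirical model of the state |diag;θ,π/4⟩ = cos(θ/2)·|0⟩⊗|0⟩ + e^{iπ/4} sin(θ/2)·|1⟩⊗|1⟩ in the two-party Bell scenario in which both Alice's and Bob's two measurements are given by the Pauli bases B_x = {(|0⟩+|1⟩)/√2, (|0⟩−|1⟩)/√2} and B_y = {(|0⟩+i|1⟩)/√2, (|0⟩−i|1⟩)/√2}, and let h(p) = −p·log₂ p − (1−p)·log₂(1−p) be the binary entropy (so S_ent(|diag;θ,π/4⟩) = h(cos²(θ/2))). Then the contextual fraction grows monotonically with the entanglement entropy: for all θ₁, θ₂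 ∈ [0,π], if h(cos²(θ₁/2)) > h(cos²(θ₂/2)) then CF(e_{θ₁}) ≥ CF(e_{θ₂}). -/
/-!
For the Pauli `x`/`y` measurements, the Born model of `|diag;θ,π/4⟩` is the isotropic noisy
PR box with correlation `k = sin θ / √2`. The CHSH functional is at most `2` in absolute value
on noncontextual models and at most `4` on all models, while it equals `4k` on the noisy PR box;
together with explicit decompositions this gives `CF = max 0 (2|k| - 1)`. Finally the binary
entropy of `cos²(θ/2)` strictly decreases in `|cos²(θ/2) - 1/2| = |cos θ| / 2`, so larger
entropy means larger `|sin θ|`.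
-/

open scoped ComplexConjugate

/-- Bloch vector `|θ,φ⟩ = cos(θ/2)|0⟩ + e^{iφ} sin(θ/2)|1⟩`. -/
noncomputable def bloch (θ φ : ℝ) : Fin 2 → ℂ :=
  ![(Real.cos (θ / 2) : ℂ), Complex.exp (φ * Complex.I) * (Real.sin (θ / 2) : ℂ)]

/-- The orthonormal basis `B(θ,φ) = {|θ,φ⟩, |π−θ,π+φ⟩}` of `ℂ²`, indexed by the
outcome. -/
noncomputable def Bbasis (θ φ : ℝ) : Fin 2 → Fin 2 → ℂ :=
  ![bloch θ φ, bloch (Real.pi - θ) (Real.pi + φ)]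

/-- The Born-rule empirical model of the state `ψ ∈ ℂ² ⊗ ℂ²` when Alice's
measurement `a_{i+1}` is given by the orthonormal basis `A i` and Bob's
measurement `b_{j+1}` by the orthonormal basis `B j`:
`e_{{a_i,b_j}}(s,t) = |⟨α_{i,s} ⊗ β_{j,t}, ψ⟩|²`. -/
noncomputable def born (A B : Fin 2 → Fin 2 → Fin 2 → ℂ) (ψ : Fin 2 × Fin 2 → ℂ) :
    Fin 2 → Fin 2 → Fin 2 → Fin 2 → ℝ := fun i j s t =>
  ‖ip4 (tens (A i s) (B j t)) ψ‖ ^ 2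

/-- An empirical model on the two-party Bell scenario: for each context
`{a_{i+1}, b_{j+1}}` a probability distribution on joint outcomes `(s, t)`. -/
def IsModel (e : Fin 2 → Fin 2 → Fin 2 → Fin 2 → ℝ) : Prop :=
  (∀ i j s t, 0 ≤ e i j s t) ∧ ∀ i j, (∑ s, ∑ t, e i j s t) = 1

/-- Noncontextuality: a global probability distribution on assignments
`g : {a₁,a₂,b₁,b₂} → {0,1}` (with `X` encoded as `Fin 2 ⊕ Fin 2`, `inl i = a_{i+1}`,
`inr j = b_{j+1}`) marginalises to every context. -/
def Noncontextual (e : Fin 2 → Fin 2 → Fin 2 → Fin 2 → ℝ) : Prop :=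
  ∃ d : (Fin 2 ⊕ Fin 2 → Fin 2) → ℝ,
    (∀ g, 0 ≤ d g) ∧ (∑ g, d g) = 1 ∧
    ∀ i j s t, (∑ g ∈ Finset.univ.filter
        (fun g : Fin 2 ⊕ Fin 2 → Fin 2 => g (.inl i) = s ∧ g (.inr j) = t), d g)
      = e i j s t

/-- The noncontextual fraction of an empirical model. -/
noncomputable def NCF (e : Fin 2 → Fin 2 → Fin 2 → Fin 2 → ℝ) : ℝ :=
  sSup {l : ℝ | 0 ≤ l ∧ l ≤ 1 ∧
    ∃ eNC e' : Fin 2 → Fin 2 → Fin 2 → Fin 2 → ℝ,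
      IsModel eNC ∧ Noncontextual eNC ∧ IsModel e' ∧
      ∀ i j s t, e i j s t = l * eNC i j s t + (1 - l) * e' i j s t}

/-- The contextual fraction of an empirical model. -/
noncomputable def CF (e : Fin 2 → Fin 2 → Fin 2 → Fin 2 → ℝ) : ℝ := 1 - NCF e

/-- Diagonal two-qubit state `|diag;θ,φ⟩ = cos(θ/2)|00⟩ + e^{iφ} sin(θ/2)|11⟩`. -/
noncomputable def diagState (θ φ : ℝ) : Fin 2 × Fin 2 → ℂ := fun p =>
  if p = (0, 0) then (Real.cos (θ / 2) : ℂ)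
  else if p = (1, 1) then Complex.exp (φ * Complex.I) * (Real.sin (θ / 2) : ℂ)
  else 0

/-- The Pauli `x` basis `{(|0⟩+|1⟩)/√2, (|0⟩−|1⟩)/√2}`. -/
noncomputable def Bx : Fin 2 → Fin 2 → ℂ :=
  ![![((Real.sqrt 2)⁻¹ : ℂ), ((Real.sqrt 2)⁻¹ : ℂ)],
    ![((Real.sqrt 2)⁻¹ : ℂ), -((Real.sqrt 2)⁻¹ : ℂ)]]

/-- The Pauli `y` basis `{(|0⟩+i|1⟩)/√2, (|0⟩−i|1⟩)/√2}`. -/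
noncomputable def By : Fin 2 → Fin 2 → ℂ :=
  ![![((Real.sqrt 2)⁻¹ : ℂ), Complex.I * ((Real.sqrt 2)⁻¹ : ℂ)],
    ![((Real.sqrt 2)⁻¹ : ℂ), -(Complex.I * ((Real.sqrt 2)⁻¹ : ℂ))]]

/-- Alice's (= Bob's) measurements in the scenario `S(B_x, B_y)`. -/
noncomputable def pauliMeas : Fin 2 → Fin 2 → Fin 2 → ℂ := ![Bx, By]

/-- Binary entropy with `log₂ x = Real.log x / Real.log 2` (so that
`S_ent(|diag;θ,π/4⟩) = binEnt (cos²(θ/2))`). -/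
noncomputable def binEnt (p : ℝ) : ℝ :=
  -(p * (Real.log p / Real.log 2)) - (1 - p) * (Real.log (1 - p) / Real.log 2)

section

open Real Finset

noncomputable def chshSign (i j s t : Fin 2) : ℝ := (-1) ^ ((i : ℕ) * j + s + t)

lemma abs_chshSign (i j s t : Fin 2) : |chshSign i j s t| = 1 := by
  simp [chshSign]

noncomputable def noisyPRBox (k : ℝ) : Fin 2 → Fin 2 → Fin 2 → Fin 2 → ℝ := fun i j s t =>
  (1 + chshSign i j s t * k) / 4

lemma noisyPRBox_convex_comb (l k₁ k₂ : ℝ) (i j s t : Fin 2) :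
    noisyPRBox (l * k₁ + (1 - l) * k₂) i j s t
      = l * noisyPRBox k₁ i j s t + (1 - l) * noisyPRBox k₂ i j s t := by
  simp only [noisyPRBox]
  ring

lemma isModel_noisyPRBox {k : ℝ} (hk : |k| ≤ 1) : IsModel (noisyPRBox k) := by
  refine ⟨fun i j s t => ?_, fun i j => ?_⟩
  · have : |chshSign i j s t * k| ≤ 1 := by rwa [abs_mul, abs_chshSign, one_mul]
    simp only [noisyPRBox]
    linarith [neg_abs_le (chshSign i j s t * k)]
  · fin_cases i <;> fin_cases j <;> simp [noisyPRBox, chshSign, Fin.sum_univ_two] <;> ring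

noncomputable def chshValue (g : Fin 2 ⊕ Fin 2 → Fin 2) : ℝ :=
  ∑ i, ∑ j, chshSign i j (g (.inl i)) (g (.inr j))

lemma abs_chshValue (g : Fin 2 ⊕ Fin 2 → Fin 2) : |chshValue g| = 2 := by
  simp only [chshValue, Fin.sum_univ_two]
  generalize g (.inl 0) = a₀, g (.inl 1) = a₁, g (.inr 0) = b₀, g (.inr 1) = b₁
  fin_cases a₀ <;> fin_cases a₁ <;> fin_cases b₀ <;> fin_cases b₁ <;> norm_num [chshSign]

lemma sum_assignments_eq (F : (Fin 2 ⊕ Fin 2 → Fin 2) → ℝ) :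
    ∑ g, F g = ∑ a₀, ∑ a₁, ∑ b₀, ∑ b₁, F (Sum.elim ![a₀, a₁] ![b₀, b₁]) := by
  rw [← ((Equiv.sumArrowEquivProdArrow _ _ _).trans
    ((finTwoArrowEquiv _).prodCongr (finTwoArrowEquiv _))).symm.sum_comp]
  simp [Fintype.sum_prod_type, Equiv.sumArrowEquivProdArrow, finTwoArrowEquiv]

lemma noncontextual_noisyPRBox {k : ℝ} (hk : |k| ≤ 1 / 2) : Noncontextual (noisyPRBox k) := by
  refine ⟨fun g => (1 + k * chshValue g) / 16, fun g => ?_, ?_, fun i j s t => ?_⟩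
  · have : |k * chshValue g| ≤ 1 := by rw [abs_mul, abs_chshValue]; linarith
    linarith [neg_abs_le (k * chshValue g)]
  · simp only [sum_assignments_eq, chshValue, chshSign, Fin.sum_univ_two]
    norm_num
    ring
  -- over the four assignments extending `(s, t)` on `{aᵢ, bⱼ}`, `chshValue` sums to
  -- `4 * chshSign i j s t`
  · rw [sum_filter, sum_assignments_eq]
    fin_cases i <;> fin_cases j <;> fin_cases s <;> fin_cases t <;>
      simp [noisyPRBox, chshValue, chshSign, Fin.sum_univ_two] <;> ring

noncomputable def chsh (e : Fin 2 → Fin 2 → Fin 2 → Fin 2 → ℝ) : ℝ :=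
  ∑ i, ∑ j, ∑ s, ∑ t, chshSign i j s t * e i j s t

lemma chsh_noisyPRBox (k : ℝ) : chsh (noisyPRBox k) = 4 * k := by
  simp only [chsh, noisyPRBox, chshSign, Fin.sum_univ_two]
  norm_num
  ring

section

variable {e : Fin 2 → Fin 2 → Fin 2 → Fin 2 → ℝ}

lemma chsh_of_eq_convex_comb {e₁ e₂ : Fin 2 → Fin 2 → Fin 2 → Fin 2 → ℝ} {l : ℝ}
    (h : ∀ i j s t, e i j s t = l * e₁ i j s t + (1 - l) * e₂ i j s t) :
    chsh e = l * chsh e₁ + (1 - l) * chsh e₂ := by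
  simp only [chsh, h, mul_sum, ← sum_add_distrib]
  congr! 4 with i j s t
  ring

lemma IsModel.abs_chsh_le (he : IsModel e) : |chsh e| ≤ 4 := by
  calc |chsh e| ≤ ∑ i, ∑ j, ∑ s, ∑ t, |chshSign i j s t * e i j s t| := by
        refine (abs_sum_le_sum_abs _ _).trans (sum_le_sum fun i _ => ?_)
        refine (abs_sum_le_sum_abs _ _).trans (sum_le_sum fun j _ => ?_)
        refine (abs_sum_le_sum_abs _ _).trans (sum_le_sum fun s _ => ?_)
        exact abs_sum_le_sum_abs _ _
    _ = ∑ i : Fin 2, ∑ j : Fin 2, 1 := by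
        simp only [abs_mul, abs_chshSign, one_mul, abs_of_nonneg (he.1 _ _ _ _), he.2]
    _ = 4 := by norm_num

lemma sum_mul_eq_sum_mul_of_marginal {d : (Fin 2 ⊕ Fin 2 → Fin 2) → ℝ}
    (hd : ∀ i j s t, (∑ g ∈ univ.filter
        (fun g : Fin 2 ⊕ Fin 2 → Fin 2 => g (.inl i) = s ∧ g (.inr j) = t), d g) = e i j s t)
    (f : Fin 2 → Fin 2 → ℝ) (i j : Fin 2) :
    ∑ s, ∑ t, f s t * e i j s t = ∑ g, f (g (.inl i)) (g (.inr j)) * d g := by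
  rw [← sum_fiberwise univ (fun g : Fin 2 ⊕ Fin 2 → Fin 2 => (g (.inl i), g (.inr j))),
    ← Fintype.sum_prod_type']
  refine sum_congr rfl fun p _ => ?_
  rw [← hd, mul_sum]
  refine sum_congr (by simp [Prod.ext_iff]) fun g hg => ?_
  rw [← (mem_filter.1 hg).2]

lemma Noncontextual.abs_chsh_le (he : Noncontextual e) : |chsh e| ≤ 2 := by
  obtain ⟨d, hd_nonneg, hd_sum, hd⟩ := he
  have hchsh : chsh e = ∑ g, chshValue g * d g := by
    simp only [chsh, sum_mul_eq_sum_mul_of_marginal hd, chshValue, sum_mul]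
    exact (sum_congr rfl fun i _ => sum_comm).trans sum_comm
  calc |chsh e| ≤ ∑ g, |chshValue g * d g| := by rw [hchsh]; exact abs_sum_le_sum_abs _ _
    _ = 2 := by
      simp only [abs_mul, abs_chshValue, abs_of_nonneg (hd_nonneg _), ← mul_sum, hd_sum, mul_one]

end

lemma NCF_noisyPRBox {k : ℝ} (hk : |k| ≤ 1) : NCF (noisyPRBox k) = min 1 (2 - 2 * |k|) := by
  refine le_antisymm (csSup_le ?_ ?_) (le_csSup ⟨1, fun l hl => hl.2.1⟩ ?_)
  · refine ⟨0, le_rfl, zero_le_one, noisyPRBox 0, noisyPRBox k, isModel_noisyPRBox (by simp),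
      noncontextual_noisyPRBox (by norm_num), isModel_noisyPRBox hk, fun i j s t => ?_⟩
    ring
  · rintro l ⟨hl0, hl1, eNC, e', -, hNC, he', hdecomp⟩
    have hchsh := chsh_of_eq_convex_comb hdecomp
    rw [chsh_noisyPRBox] at hchsh
    have h₁ := abs_le.1 hNC.abs_chsh_le
    have h₂ := abs_le.1 he'.abs_chsh_le
    refine le_min hl1 ?_
    rcases abs_cases k with ⟨hk', -⟩ | ⟨hk', -⟩ <;> rw [hk'] <;>
      nlinarith [mul_le_mul_of_nonneg_left h₁.2 hl0, mul_le_mul_of_nonneg_left h₁.1 hl0,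
        mul_le_mul_of_nonneg_left h₂.2 (sub_nonneg.2 hl1),
        mul_le_mul_of_nonneg_left h₂.1 (sub_nonneg.2 hl1)]
  · rcases le_or_gt |k| (1 / 2) with hk' | hk'
    · rw [min_eq_left (by linarith)]
      exact ⟨zero_le_one, le_rfl, noisyPRBox k, noisyPRBox k, isModel_noisyPRBox hk,
        noncontextual_noisyPRBox hk', isModel_noisyPRBox hk, fun i j s t => by ring⟩
    · rw [min_eq_right (by linarith)]
      have hk0 : |k| ≠ 0 := by positivity
      have hlocal : |k / (2 * |k|)| = 1 / 2 := by
        rw [abs_div, abs_mul, abs_two, abs_abs]; field_simp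
      have hPR : |(k / |k|)| = 1 := by rw [abs_div, abs_abs, div_self hk0]
      -- a local box on the CHSH facet mixed with a PR box of the same sign
      have hmix : k = (2 - 2 * |k|) * (k / (2 * |k|)) + (1 - (2 - 2 * |k|)) * (k / |k|) := by
        field_simp
        ring
      refine ⟨by linarith, by linarith, _, _, isModel_noisyPRBox ?_, noncontextual_noisyPRBox ?_,
        isModel_noisyPRBox hPR.le, fun i j s t => hmix ▸ noisyPRBox_convex_comb _ _ _ i j s t⟩ <;>
        linarith

lemma CF_noisyPRBox {k : ℝ} (hk : |k| ≤ 1) : CF (noisyPRBox k) = max 0 (2 * |k| - 1) := by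
  rw [CF, NCF_noisyPRBox hk, ← max_sub_sub_left, sub_self]
  ring_nf

lemma ip4_tens_diagState (u v : Fin 2 → ℂ) (θ φ : ℝ) :
    ip4 (tens u v) (diagState θ φ) =
      conj (u 0 * v 0) * cos (θ / 2)
        + conj (u 1 * v 1) * (Complex.exp (φ * Complex.I) * sin (θ / 2)) := by
  simp [ip4, tens, diagState, Fintype.sum_prod_type, Fin.sum_univ_two]

lemma norm_sq_cos_half_add_mul_sin_half (θ : ℝ) {z : ℂ} (hz : ‖z‖ = 1) :
    ‖(cos (θ / 2) : ℂ) + z * sin (θ / 2)‖ ^ 2 = 1 + sin θ * z.re := by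
  have hz' : z.re * z.re + z.im * z.im = 1 := by
    rw [← Complex.normSq_apply, ← Complex.sq_norm, hz, one_pow]
  have hsin : sin θ = 2 * sin (θ / 2) * cos (θ / 2) := by
    rw [← sin_two_mul, mul_div_cancel₀ θ two_ne_zero]
  rw [Complex.sq_norm, Complex.normSq_apply, hsin]
  simp only [Complex.add_re, Complex.add_im, Complex.mul_re, Complex.mul_im, Complex.ofReal_re,
    Complex.ofReal_im, mul_zero, sub_zero, zero_add]
  linear_combination sin (θ / 2) ^ 2 * hz' + sin_sq_add_cos_sq (θ / 2)

def pauliPhase : Fin 2 → Fin 2 → ℂ := ![![1, -1], ![Complex.I, -Complex.I]]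

lemma norm_pauliPhase (i s : Fin 2) : ‖pauliPhase i s‖ = 1 := by
  fin_cases i <;> fin_cases s <;> simp [pauliPhase]

lemma pauliMeas_apply (i s : Fin 2) :
    pauliMeas i s = ![(((√2)⁻¹ : ℝ) : ℂ), (((√2)⁻¹ : ℝ) : ℂ) * pauliPhase i s] := by
  fin_cases i <;> fin_cases s <;> ext k <;> fin_cases k <;>
    simp [pauliMeas, Bx, By, pauliPhase, mul_comm]

lemma re_conj_pauliPhase_mul_exp (i j s t : Fin 2) :
    (conj (pauliPhase i s * pauliPhase j t) * Complex.exp (↑(π / 4) * Complex.I)).re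
      = chshSign i j s t / √2 := by
  rw [Complex.exp_mul_I, ← Complex.ofReal_cos, ← Complex.ofReal_sin, cos_pi_div_four,
    sin_pi_div_four]
  have hsqrt : √2 / 2 = 1 / √2 := by
    field_simp
    rw [sq_sqrt zero_le_two]
  fin_cases i <;> fin_cases j <;> fin_cases s <;> fin_cases t <;>
    simp [pauliPhase, chshSign, hsqrt] <;> ring

lemma born_pauliMeas_diagState (θ : ℝ) :
    born pauliMeas pauliMeas (diagState θ (π / 4)) = noisyPRBox (sin θ / √2) := by
  funext i j s t
  have hz : ‖conj (pauliPhase i s * pauliPhase j t) * Complex.exp (↑(π / 4) * Complex.I)‖ = 1 := by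
    simp only [norm_mul, Complex.norm_conj, norm_pauliPhase, Complex.norm_exp_ofReal_mul_I,
      mul_one]
  have hsqrt : (((√2)⁻¹ : ℝ) : ℂ) * (((√2)⁻¹ : ℝ) : ℂ) = 1 / 2 := by
    rw [← Complex.ofReal_mul, ← mul_inv, mul_self_sqrt zero_le_two]
    norm_num
  have hip : ip4 (tens (pauliMeas i s) (pauliMeas j t)) (diagState θ (π / 4))
      = 1 / 2 * ((cos (θ / 2) : ℂ) + conj (pauliPhase i s * pauliPhase j t)
          * Complex.exp (↑(π / 4) * Complex.I) * sin (θ / 2)) := by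
    rw [ip4_tens_diagState, pauliMeas_apply, pauliMeas_apply]
    simp only [Matrix.cons_val_zero, Matrix.cons_val_one, map_mul, Complex.conj_ofReal]
    linear_combination (cos (θ / 2) + conj (pauliPhase i s) * conj (pauliPhase j t)
      * Complex.exp (↑(π / 4) * Complex.I) * sin (θ / 2)) * hsqrt
  rw [born, hip, norm_mul, mul_pow, norm_sq_cos_half_add_mul_sin_half θ hz, noisyPRBox,
    re_conj_pauliPhase_mul_exp]
  norm_num
  ring

lemma abs_sin_div_sqrt_two_le_one (θ : ℝ) : |sin θ / √2| ≤ 1 := by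
  rw [abs_div, abs_of_nonneg (sqrt_nonneg 2), div_le_one (sqrt_pos.2 two_pos)]
  exact (abs_sin_le_one θ).trans one_lt_sqrt_two.le

lemma Real.binEntropy_eq_binEntropy_two_inv_sub_abs (p : ℝ) :
    binEntropy p = binEntropy (2⁻¹ - |p - 2⁻¹|) := by
  rcases abs_cases (p - 2⁻¹) with ⟨h, -⟩ | ⟨h, -⟩
  · rw [h, ← binEntropy_two_inv_add, add_sub_cancel]
  · rw [h, sub_neg_eq_add, add_sub_cancel]

lemma Real.binEntropy_le_binEntropy_of_abs_sub_two_inv_le {p q : ℝ} (hp : |p - 2⁻¹| ≤ 2⁻¹)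
    (hpq : |q - 2⁻¹| ≤ |p - 2⁻¹|) : binEntropy p ≤ binEntropy q := by
  rw [binEntropy_eq_binEntropy_two_inv_sub_abs p, binEntropy_eq_binEntropy_two_inv_sub_abs q]
  refine binEntropy_strictMonoOn.monotoneOn ⟨?_, ?_⟩ ⟨?_, ?_⟩ (by linarith) <;>
    linarith [abs_nonneg (q - 2⁻¹)]

lemma binEnt_eq_binEntropy_div_log_two (p : ℝ) : binEnt p = binEntropy p / log 2 := by
  rw [binEnt, binEntropy, log_inv, log_inv]
  ring

lemma cos_sq_half_sub_two_inv (θ : ℝ) : cos (θ / 2) ^ 2 - 2⁻¹ = cos θ / 2 := by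
  rw [cos_sq, mul_div_cancel₀ θ two_ne_zero]
  ring

lemma abs_cos_lt_of_binEnt_cos_sq_half_lt {θ₁ θ₂ : ℝ}
    (h : binEnt (cos (θ₂ / 2) ^ 2) < binEnt (cos (θ₁ / 2) ^ 2)) : |cos θ₁| < |cos θ₂| := by
  rw [binEnt_eq_binEntropy_div_log_two, binEnt_eq_binEntropy_div_log_two,
    div_lt_div_iff_of_pos_right (log_pos one_lt_two)] at h
  contrapose! h
  refine binEntropy_le_binEntropy_of_abs_sub_two_inv_le ?_ ?_ <;>
    simp only [cos_sq_half_sub_two_inv, abs_div, abs_two]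
  · linarith [abs_cos_le_one θ₁]
  · linarith

lemma abs_sin_lt_abs_sin_of_abs_cos_lt {x y : ℝ} (h : |cos x| < |cos y|) :
    |sin y| < |sin x| := by
  rw [← sq_lt_sq] at h ⊢
  linarith [sin_sq_add_cos_sq x, sin_sq_add_cos_sq y]

end

theorem contextual_fraction_monotone_in_entropy_general
    (θ₁ θ₂ : ℝ)
    (h : binEnt (Real.cos (θ₁ / 2) ^ 2) > binEnt (Real.cos (θ₂ / 2) ^ 2)) :
    CF (born pauliMeas pauliMeas (diagState θ₁ (Real.pi / 4)))
      ≥ CF (born pauliMeas pauliMeas (diagState θ₂ (Real.pi / 4))) := by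
  have hsin : |Real.sin θ₂| < |Real.sin θ₁| :=
    abs_sin_lt_abs_sin_of_abs_cos_lt (abs_cos_lt_of_binEnt_cos_sq_half_lt h)
  rw [born_pauliMeas_diagState, born_pauliMeas_diagState,
    CF_noisyPRBox (abs_sin_div_sqrt_two_le_one θ₁), CF_noisyPRBox (abs_sin_div_sqrt_two_le_one θ₂),
    abs_div, abs_div]
  gcongr

/-- the contextual fraction of `|diag;θ,π/4⟩` with respect to the
scenario `S(B_x, B_y)` grows monotonically with the entanglement entropy. -/
theorem contextual_fraction_monotone_in_entropy
    (θ₁ θ₂ : ℝ) (h₁ : θ₁ ∈ Set.Icc 0 Real.pi) (h₂ : θ₂ ∈ Set.Icc 0 Real.pi)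
    (h : binEnt (Real.cos (θ₁ / 2) ^ 2) > binEnt (Real.cos (θ₂ / 2) ^ 2)) :
    CF (born pauliMeas pauliMeas (diagState θ₁ (Real.pi / 4)))
      ≥ CF (born pauliMeas pauliMeas (diagState θ₂ (Real.pi / 4))) :=
  contextual_fraction_monotone_in_entropy_general θ₁ θ₂ h
end

section
/- Let |GHZ₂⟩ = (|0⟩⊗|0⟩ + |1⟩⊗|1⟩)/√2. For all φ₁, φ₂ ∈ ℝ, consider the two-party Bell scenario in which both Alice's and Bob's two measurements are given by the equatorial orthonormal bases B(π/2, φ₁) = {|π/2, φ₁⟩, |π/2, π + φ₁⟩} and B(π/2, φ₂) = {|π/2, φ₂⟩, |π/2, π + φ₂⟩}. Then the contextual fraction of the Born-rule empirical model of |GHZ₂⟩ with respect to this scenario satisfies CF ≤ √2 − 1; in particular the model is never strongly contextual (CF < 1). -/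
open scoped ComplexConjugate

/-- The two-qubit GHZ state `(|00⟩ + |11⟩)/√2`. -/
noncomputable def ghz : Fin 2 × Fin 2 → ℂ := fun p =>
  if p.1 = p.2 then ((Real.sqrt 2)⁻¹ : ℂ) else 0

/-- Alice's (= Bob's) equatorial measurements `a₁ = B(π/2, φ₁)`,
`a₂ = B(π/2, φ₂)`. -/
noncomputable def equatMeas (φ₁ φ₂ : ℝ) : Fin 2 → Fin 2 → Fin 2 → ℂ :=
  ![Bbasis (Real.pi / 2) φ₁, Bbasis (Real.pi / 2) φ₂]


/-!
The Born model of the GHZ state for equatorial measurements has uniform marginals and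
correlators `E i j = cos (φ i + φ j)`. Shrinking every correlator towards `0` by
`μ = √2 - 1` (and pulling the two diagonal ones towards each other) produces, after rescaling
by `1 / (1 - μ)`, a symmetric correlation matrix `[[p, m], [m, q]]` with
`|m| + |p - q| / 2 ≤ 1`, which is a mixture of deterministic strategies. This is possible
because `|cos (φ₁ + φ₂)| + |cos 2φ₁ - cos 2φ₂| / 2 ≤ |cos (φ₁ + φ₂)| + |sin (φ₁ + φ₂)| ≤ √2`.
The residual is again an empirical model, so `NCF ≥ 1 - μ = 2 - √2`.
-/

open Finset

def spin (s : Fin 2) : ℝ := (-1) ^ (s : ℕ)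

lemma spin_add (s t : Fin 2) : spin (s + t) = spin s * spin t := by
  fin_cases s <;> fin_cases t <;> norm_num [spin, Fin.val_add]

lemma abs_mul_spin_ite_neg (a : ℝ) : |a| * spin (if a < 0 then 1 else 0) = a := by
  split_ifs with h
  · simp [spin, abs_of_neg h]
  · simp [spin, abs_of_nonneg (not_lt.mp h)]

noncomputable def corrModel (E : Fin 2 → Fin 2 → ℝ) : Fin 2 → Fin 2 → Fin 2 → Fin 2 → ℝ :=
  fun i j s t => (1 + spin s * spin t * E i j) / 4

lemma isModel_corrModel {E : Fin 2 → Fin 2 → ℝ} (hE : ∀ i j, |E i j| ≤ 1) :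
    IsModel (corrModel E) := by
  refine ⟨fun i j s t => ?_, fun i j => ?_⟩
  · have h := abs_le.mp (hE i j)
    unfold corrModel
    fin_cases s <;> fin_cases t <;> norm_num [spin] <;> linarith
  · norm_num [corrModel, Fin.sum_univ_two, spin]
    ring

theorem le_NCF {e eNC e' : Fin 2 → Fin 2 → Fin 2 → Fin 2 → ℝ} {l : ℝ} (hl0 : 0 ≤ l)
    (hl1 : l ≤ 1) (hNC : IsModel eNC) (hNC' : Noncontextual eNC) (he' : IsModel e')
    (he : ∀ i j s t, e i j s t = l * eNC i j s t + (1 - l) * e' i j s t) : l ≤ NCF e :=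
  le_csSup ⟨1, fun _ hl => hl.2.1⟩ ⟨hl0, hl1, eNC, e', hNC, hNC', he', he⟩

theorem le_NCF_corrModel {μ : ℝ} (hμ0 : 0 < μ) (hμ1 : μ ≤ 1) {E L : Fin 2 → Fin 2 → ℝ}
    (hL : Noncontextual (corrModel L)) (hL1 : ∀ i j, |L i j| ≤ 1)
    (hEL : ∀ i j, |E i j - (1 - μ) * L i j| ≤ μ) : 1 - μ ≤ NCF (corrModel E) := by
  refine le_NCF (by linarith) (by linarith) (isModel_corrModel hL1) hL
    (e' := corrModel fun i j => (E i j - (1 - μ) * L i j) / μ)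
    (isModel_corrModel fun i j => ?_) fun i j s t => ?_
  · rw [abs_div, abs_of_pos hμ0, div_le_one hμ0]
    exact hEL i j
  · simp only [corrModel, sub_sub_cancel]
    field_simp
    ring

theorem noncontextual_of_hiddenVariables {Λ : Type*} [Fintype Λ] (w : Λ → ℝ)
    (hw : ∀ l, 0 ≤ w l) (hw1 : ∑ l, w l = 1) (a b : Λ → Fin 2 → Fin 2) :
    Noncontextual fun i j s t => ∑ l with a l i = s ∧ b l j = t, w l := by
  classical
  let G l : Fin 2 ⊕ Fin 2 → Fin 2 := Sum.elim (a l) (b l)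
  refine ⟨fun g => ∑ l with G l = g, w l, fun g => sum_nonneg fun l _ => hw l,
    (sum_fiberwise _ _ _).trans hw1, fun i j s t => ?_⟩
  dsimp only
  rw [← sum_fiberwise_of_maps_to (g := G) (t := {g | g (.inl i) = s ∧ g (.inr j) = t})
    (fun l hl => by simpa [G] using hl)]
  refine sum_congr rfl fun g hg => sum_congr ?_ fun _ _ => rfl
  ext l
  simp only [mem_filter, mem_univ, true_and] at hg ⊢
  constructor
  · rintro rfl
    exact ⟨hg, rfl⟩
  · exact And.right

lemma sum_ite_add_eq_and_add_eq (a b s t : Fin 2) (c : ℝ) :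
    ∑ ε : Fin 2, (if a + ε = s ∧ b + ε = t then c else 0) =
      c * (1 + spin a * spin b * spin s * spin t) / 2 := by
  fin_cases a <;> fin_cases b <;> fin_cases s <;> fin_cases t <;>
    norm_num [spin, Fin.sum_univ_two, show (1 + 1 : Fin 2) = 0 from rfl]

theorem noncontextual_corrModel_of_sum_abs_eq_one {K : Type*} [Fintype K] (w : K → ℝ)
    (hw : ∑ k, |w k| = 1) (x y : K → Fin 2 → Fin 2) :
    Noncontextual (corrModel fun i j => ∑ k, w k * (spin (x k i) * spin (y k j))) := by
  -- Strategy `k` is played with probability `|w k|`, with Alice's outputs flipped when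
  -- `w k < 0`, and both outputs flipped by a fair coin `ε` to make the marginals uniform.
  convert noncontextual_of_hiddenVariables (Λ := K × Fin 2) (fun l => |w l.1| / 2)
    (fun _ => by positivity) (by simp [Fintype.sum_prod_type, ← sum_div, hw, ← mul_sum])
    (fun l i => x l.1 i + (if w l.1 < 0 then 1 else 0) + l.2) (fun l j => y l.1 j + l.2) using 1
  ext i j s t
  rw [sum_filter, Fintype.sum_prod_type]
  conv_lhs => rw [corrModel, ← hw, mul_sum, ← sum_add_distrib, sum_div]
  refine sum_congr rfl fun k _ => ?_
  refine Eq.trans ?_ (sum_ite_add_eq_and_add_eq _ _ _ _ _).symm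
  rw [spin_add]
  linear_combination (-(spin s * spin t * spin (x k i) * spin (y k j)) / 4) *
    abs_mul_spin_ite_neg (w k)

theorem noncontextual_corrModel_of_sum_abs_le_one {K : Type*} [Fintype K] (w : K → ℝ)
    (hw : ∑ k, |w k| ≤ 1) (x y : K → Fin 2 → Fin 2) :
    Noncontextual (corrModel fun i j => ∑ k, w k * (spin (x k i) * spin (y k j))) := by
  have hr : 0 ≤ 1 - ∑ k, |w k| := sub_nonneg.mpr hw
  -- two cancelling copies of one strategy make up the missing weight
  convert noncontextual_corrModel_of_sum_abs_eq_one (K := K ⊕ Fin 2)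
    (Sum.elim w ![(1 - ∑ k, |w k|) / 2, -(1 - ∑ k, |w k|) / 2]) ?_
    (Sum.elim x fun _ _ => 0) (Sum.elim y fun _ _ => 0) using 2
  · ext i j
    simp only [Fintype.sum_sum_type, Fin.sum_univ_two, Sum.elim_inl, Sum.elim_inr]
    simp
    ring
  · simp only [Fintype.sum_sum_type, Fin.sum_univ_two, Sum.elim_inl, Sum.elim_inr]
    simp only [Matrix.cons_val_zero, Matrix.cons_val_one, neg_div, abs_neg, abs_div,
      abs_of_nonneg hr, abs_two]
    ring

theorem noncontextual_corrModel_symm {p q m : ℝ} (hp : |p| ≤ 1) (hq : |q| ≤ 1)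
    (hm : |m| + |p - q| / 2 ≤ 1) : Noncontextual (corrModel ![![p, m], ![m, q]]) := by
  -- the deterministic correlators used are `[[1, 1], [1, 1]]`, `[[1, -1], [-1, 1]]`,
  -- `[[1, 1], [-1, -1]]` and `[[1, -1], [1, -1]]`
  convert noncontextual_corrModel_of_sum_abs_le_one
    ![(p + q + 2 * m) / 4, (p + q - 2 * m) / 4, (p - q) / 4, (p - q) / 4] ?_
    ![![0, 0], ![0, 1], ![0, 1], ![0, 0]] ![![0, 0], ![0, 1], ![0, 0], ![0, 1]] using 2
  · ext i j
    fin_cases i <;> fin_cases j <;> simp [Fin.sum_univ_four, spin] <;> ring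
  · simp only [Fin.sum_univ_four, Matrix.cons_val, abs_div,
      abs_of_pos (by norm_num : (0 : ℝ) < 4)]
    cases abs_cases (p + q + 2 * m) <;> cases abs_cases (p + q - 2 * m) <;>
      cases abs_cases (p - q) <;> cases abs_cases m <;>
      cases abs_le.mp hp <;> cases abs_le.mp hq <;> linarith

section Clip

variable {r x y : ℝ}

def clip (r x : ℝ) : ℝ := max (-r) (min r x)

lemma abs_clip_le (hr : 0 ≤ r) : |clip r x| ≤ r := by
  unfold clip; grind

lemma abs_sub_clip_le (hr : 0 ≤ r) : |x - clip r x| ≤ max 0 (|x| - r) := by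
  unfold clip; grind

lemma abs_clip_sub_clip_le : |clip r x - clip r y| ≤ |x - y| := by
  unfold clip; grind

lemma abs_sub_clip_le_of_abs_sub_le {μ : ℝ} (hx : |x| ≤ r + μ) (hxy : |x - y| ≤ μ) :
    |x - clip r y| ≤ μ := by
  unfold clip; grind

end Clip

theorem exists_local_symm_near {μ X Y C : ℝ} (hμ0 : 0 ≤ μ) (hμ1 : μ ≤ 1) (hX : |X| ≤ 1)
    (hY : |Y| ≤ 1) (hC : |C| ≤ 1) (h : |C| + |X - Y| / 2 ≤ 1 + μ) :
    ∃ p q m, |p| ≤ 1 - μ ∧ |q| ≤ 1 - μ ∧ |m| + |p - q| / 2 ≤ 1 - μ ∧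
      |X - p| ≤ μ ∧ |Y - q| ≤ μ ∧ |C - m| ≤ μ := by
  set D := (X - Y) / 2
  set δ := clip μ D
  have hδ : |δ| ≤ μ := abs_clip_le hμ0
  refine ⟨clip (1 - μ) (X - δ), clip (1 - μ) (Y + δ), C - clip μ C,
    abs_clip_le (by linarith), abs_clip_le (by linarith), ?_,
    abs_sub_clip_le_of_abs_sub_le (by linarith) (by simpa using hδ),
    abs_sub_clip_le_of_abs_sub_le (by linarith) (by simpa using hδ),
    by simpa using abs_clip_le (x := C) hμ0⟩
  have hm := abs_sub_clip_le (x := C) hμ0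
  have hpq : |clip (1 - μ) (X - δ) - clip (1 - μ) (Y + δ)| ≤ 2 * max 0 (|D| - μ) :=
    calc _ ≤ |X - δ - (Y + δ)| := abs_clip_sub_clip_le
      _ = 2 * |D - δ| := by rw [← abs_two, ← abs_mul]; congr 1; ring
      _ ≤ 2 * max 0 (|D| - μ) := by gcongr; exact abs_sub_clip_le hμ0
  have hD : |D| = |X - Y| / 2 := by simp [D, abs_div]
  have hD1 : |D| ≤ 1 := by rw [hD]; linarith [abs_sub X Y]
  rcases max_cases 0 (|C| - μ) with ⟨h1, _⟩ | ⟨h1, _⟩ <;>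
    rcases max_cases 0 (|D| - μ) with ⟨h2, _⟩ | ⟨h2, _⟩ <;> linarith

theorem le_NCF_corrModel_symm {μ X Y C : ℝ} (hμ0 : 0 < μ) (hμ1 : μ < 1) (hX : |X| ≤ 1)
    (hY : |Y| ≤ 1) (hC : |C| ≤ 1) (h : |C| + |X - Y| / 2 ≤ 1 + μ) :
    1 - μ ≤ NCF (corrModel ![![X, C], ![C, Y]]) := by
  obtain ⟨p, q, m, hp, hq, hpqm, hXp, hYq, hCm⟩ :=
    exists_local_symm_near hμ0.le hμ1.le hX hY hC h
  have hν : 0 < 1 - μ := by linarith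
  have hscale {a : ℝ} (ha : |a| ≤ 1 - μ) : |a / (1 - μ)| ≤ 1 := by
    rwa [abs_div, abs_of_pos hν, div_le_one hν]
  have hm : |m| ≤ 1 - μ := by linarith [abs_nonneg (p - q)]
  refine le_NCF_corrModel hμ0 hμ1.le
    (L := ![![p / (1 - μ), m / (1 - μ)], ![m / (1 - μ), q / (1 - μ)]])
    (noncontextual_corrModel_symm (hscale hp) (hscale hq) ?_) (fun i j => ?_) (fun i j => ?_)
  · rw [← sub_div, abs_div, abs_div, abs_of_pos hν, div_right_comm, ← add_div, div_le_one hν]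
    exact hpqm
  · fin_cases i <;> fin_cases j <;> simp [hscale hp, hscale hq, hscale hm]
  · fin_cases i <;> fin_cases j <;> simp [mul_div_cancel₀ _ hν.ne'] <;> assumption

lemma ip4_tens_ghz (u v : Fin 2 → ℂ) :
    ip4 (tens u v) ghz = conj (u 0 * v 0 + u 1 * v 1) / (Real.sqrt 2 : ℂ) := by
  simp [ip4, tens, ghz, Fintype.sum_prod_type, Fin.sum_univ_two]
  ring

lemma bloch_pi_div_two (φ : ℝ) :
    bloch (Real.pi / 2) φ =
      ![(Real.sqrt 2 / 2 : ℂ), Complex.exp (φ * Complex.I) * (Real.sqrt 2 / 2 : ℂ)] := by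
  rw [bloch, div_div, show (2 : ℝ) * 2 = 4 by norm_num, Real.cos_pi_div_four,
    Real.sin_pi_div_four]
  push_cast
  rfl

lemma Bbasis_pi_div_two (φ : ℝ) (s : Fin 2) :
    Bbasis (Real.pi / 2) φ s = bloch (Real.pi / 2) (φ + (s : ℕ) * Real.pi) := by
  fin_cases s
  · simp [Bbasis]
  · simp [Bbasis, add_comm]
    ring_nf

lemma norm_one_add_exp_sq (θ : ℝ) :
    ‖1 + Complex.exp (θ * Complex.I)‖ ^ 2 = 2 + 2 * Real.cos θ := by
  rw [Complex.sq_norm, Complex.normSq_apply]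
  simp [Complex.exp_ofReal_mul_I_re, Complex.exp_ofReal_mul_I_im]
  nlinarith [Real.sin_sq_add_cos_sq θ]

lemma norm_ip4_tens_bloch_ghz_sq (a b : ℝ) :
    ‖ip4 (tens (bloch (Real.pi / 2) a) (bloch (Real.pi / 2) b)) ghz‖ ^ 2 =
      (1 + Real.cos (a + b)) / 4 := by
  have h : bloch (Real.pi / 2) a 0 * bloch (Real.pi / 2) b 0 +
      bloch (Real.pi / 2) a 1 * bloch (Real.pi / 2) b 1 =
        (1 + Complex.exp ((a + b : ℝ) * Complex.I)) / 2 := by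
    simp only [bloch_pi_div_two, Matrix.cons_val_zero, Matrix.cons_val_one]
    have hs : (Real.sqrt 2 : ℂ) * Real.sqrt 2 = 2 := by
      rw [← Complex.ofReal_mul, Real.mul_self_sqrt zero_le_two]
      norm_num
    push_cast
    rw [add_mul, Complex.exp_add]
    linear_combination (1 + Complex.exp (a * Complex.I) * Complex.exp (b * Complex.I)) / 4 * hs
  rw [ip4_tens_ghz, h, norm_div, Complex.norm_conj, norm_div, div_pow, div_pow,
    norm_one_add_exp_sq]
  simp
  ring

lemma cos_add_nat_mul_pi_add_add_nat_mul_pi (a b : ℝ) (s t : Fin 2) :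
    Real.cos (a + (s : ℕ) * Real.pi + (b + (t : ℕ) * Real.pi)) =
      spin s * spin t * Real.cos (a + b) := by
  rw [show a + (s : ℕ) * Real.pi + (b + (t : ℕ) * Real.pi) =
      a + b + ((s + t : ℕ) : ℝ) * Real.pi by push_cast; ring,
    Real.cos_add_nat_mul_pi, spin, spin, pow_add]

theorem born_equator_ghz (v : Fin 2 → ℝ) :
    born (fun i => Bbasis (Real.pi / 2) (v i)) (fun j => Bbasis (Real.pi / 2) (v j)) ghz =
      corrModel fun i j => Real.cos (v i + v j) := by
  ext i j s t
  rw [born, Bbasis_pi_div_two, Bbasis_pi_div_two, norm_ip4_tens_bloch_ghz_sq,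
    cos_add_nat_mul_pi_add_add_nat_mul_pi, corrModel]

lemma abs_cos_add_abs_sin_le_sqrt_two (θ : ℝ) : |Real.cos θ| + |Real.sin θ| ≤ Real.sqrt 2 :=
  Real.le_sqrt_of_sq_le <| by
    nlinarith [Real.sin_sq_add_cos_sq θ, sq_abs (Real.sin θ), sq_abs (Real.cos θ),
      sq_nonneg (|Real.cos θ| - |Real.sin θ|)]

lemma abs_cos_add_add_abs_cos_sub_cos_le (a b : ℝ) :
    |Real.cos (a + b)| + |Real.cos (a + a) - Real.cos (b + b)| / 2 ≤ Real.sqrt 2 := by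
  have h : |Real.cos (a + a) - Real.cos (b + b)| / 2 =
      |Real.sin (a + b)| * |Real.sin (a - b)| := by
    rw [Real.cos_sub_cos, show (a + a + (b + b)) / 2 = a + b by ring,
      show (a + a - (b + b)) / 2 = a - b by ring, abs_mul, abs_mul, abs_neg, abs_two]
    ring
  rw [h]
  nlinarith [abs_cos_add_abs_sin_le_sqrt_two (a + b), abs_nonneg (Real.sin (a + b)),
    Real.abs_sin_le_one (a - b)]

/-- for all equatorial scenarios `S(B(π/2,φ₁), B(π/2,φ₂))`, the
contextual fraction of the GHZ state is at most `√2 − 1`; in particular the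
model is never strongly contextual. -/
theorem ghz_equatorial_contextual_fraction_bound (φ₁ φ₂ : ℝ) :
    CF (born (equatMeas φ₁ φ₂) (equatMeas φ₁ φ₂) ghz) ≤ Real.sqrt 2 - 1 ∧
    CF (born (equatMeas φ₁ φ₂) (equatMeas φ₁ φ₂) ghz) < 1 := by
  have h1 : 1 < Real.sqrt 2 := Real.one_lt_sqrt_two
  have h2 : Real.sqrt 2 < 2 := by rw [Real.sqrt_lt' two_pos]; norm_num
  have hmeas : equatMeas φ₁ φ₂ = fun i => Bbasis (Real.pi / 2) (![φ₁, φ₂] i) := by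
    ext i : 1
    fin_cases i <;> rfl
  have hE : (fun i j => Real.cos (![φ₁, φ₂] i + ![φ₁, φ₂] j)) =
      ![![Real.cos (φ₁ + φ₁), Real.cos (φ₁ + φ₂)], ![Real.cos (φ₁ + φ₂), Real.cos (φ₂ + φ₂)]] := by
    ext i j
    fin_cases i <;> fin_cases j <;> simp [add_comm]
  have hNCF : 1 - (Real.sqrt 2 - 1) ≤ NCF (born (equatMeas φ₁ φ₂) (equatMeas φ₁ φ₂) ghz) := by
    rw [hmeas, born_equator_ghz, hE]
    refine le_NCF_corrModel_symm (by linarith) (by linarith) (Real.abs_cos_le_one _)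
      (Real.abs_cos_le_one _) (Real.abs_cos_le_one _) ?_
    linarith [abs_cos_add_add_abs_cos_sub_cos_le φ₁ φ₂]
  unfold CF
  constructor <;> linarith
end
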